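/- Let P(t) = t¹²+232t⁹+960t⁶+256t³+256 and Q(t) = t¹⁸-516t¹⁵-12072t¹²-24640t⁹-30720t⁶+6144t³+4096. Then the polynomial identity P(t)³ - Q(t)² = 1728 · t⁶·(t+1)³·(t²-t+1)³·(t-2)⁶·(t²+2t+4)⁶ holds in ℤ[t]. -/

import Mathlib

/-! Both sides only involve `s = t³`: with `t³ + 1 = (t + 1)(t² - t + 1)` and
`t³ - 8 = (t - 2)(t² + 2t + 4)` the identity is the pullback along `t ↦ t³` of
`P(s)³ - Q(s)² = 1728 s² (s + 1)³ (s - 8)⁶`, which holds in every commutative ring. -/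

open Polynomial

theorem discriminant_identity_in_cube {R : Type*} [CommRing R] (s : R) :
    (s ^ 4 + 232 * s ^ 3 + 960 * s ^ 2 + 256 * s + 256) ^ 3 -
        (s ^ 6 - 516 * s ^ 5 - 12072 * s ^ 4 - 24640 * s ^ 3 - 30720 * s ^ 2 + 6144 * s + 4096) ^ 2 =
      1728 * (s ^ 2 * (s + 1) ^ 3 * (s - 8) ^ 6) := by
  ring

theorem discriminant_identity :
    ((X ^ 12 + 232 * X ^ 9 + 960 * X ^ 6 + 256 * X ^ 3 + 256 : Polynomial ℤ)) ^ 3 -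
        (X ^ 18 - 516 * X ^ 15 - 12072 * X ^ 12 - 24640 * X ^ 9 - 30720 * X ^ 6 +
            6144 * X ^ 3 + 4096 : Polynomial ℤ) ^ 2 =
      1728 * (X ^ 6 * (X + 1) ^ 3 * (X ^ 2 - X + 1) ^ 3 * (X - 2) ^ 6 *
        (X ^ 2 + 2 * X + 4) ^ 6) := by
  have hcube : (X ^ 6 * (X + 1) ^ 3 * (X ^ 2 - X + 1) ^ 3 * (X - 2) ^ 6 *
      (X ^ 2 + 2 * X + 4) ^ 6 : ℤ[X]) = (X ^ 3) ^ 2 * (X ^ 3 + 1) ^ 3 * (X ^ 3 - 8) ^ 6 := by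
    ring
  rw [hcube]
  linear_combination discriminant_identity_in_cube (X ^ 3 : ℤ[X])
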